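/- Let K be a field and L/K an algebraic field extension. Then p̃(K) ≥ p'(L), where p̃(K) = sup{p'(F) : F/K a function field in one variable} and p'(L) = p(L) if L is real or char L = 2, and p'(L) = s(L) + 1 otherwise. -/

import Mathlib

/-- `a` is a sum of `n` squares in `R`. -/
def IsSumSqN {R : Type*} [CommRing R] (n : ℕ) (a : R) : Prop :=
  ∃ x : Fin n → R, a = ∑ i, x i ^ 2

/-- `a` is a sum of squares in `R`. -/
def IsSOS {R : Type*} [CommRing R] (a : R) : Prop := ∃ n, IsSumSqN n a

/-- The level `s(R)`. -/
noncomputable def levelN (R : Type*) [CommRing R] : ℕ∞ :=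
  sInf {n : ℕ∞ | ∃ m : ℕ, (m : ℕ∞) = n ∧ IsSumSqN m (-1 : R)}

/-- The Pythagoras number `p(R)`. -/
noncomputable def pythNum (R : Type*) [CommRing R] : ℕ∞ :=
  sInf {n : ℕ∞ | ∃ m : ℕ, (m : ℕ∞) = n ∧ ∀ a : R, IsSOS a → IsSumSqN m a}

open Classical in
/-- The modified Pythagoras number `p'(R)`. -/
noncomputable def pythNum' (R : Type*) [CommRing R] : ℕ∞ :=
  if ¬ IsSOS (-1 : R) ∨ ringChar R = 2 then pythNum R else levelN R + 1

/-- `F/k` is a function field in one variable: finitely generated of transcendence degree 1. -/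
def IsFunctionField1 (k F : Type*) [Field k] [Field F] [Algebra k F] : Prop :=
  (∃ s : Finset F, IntermediateField.adjoin k (s : Set F) = ⊤) ∧
  ∃ x : F, Transcendental k x ∧
    Algebra.IsAlgebraic (IntermediateField.adjoin k {x}) F

/-- `p̃(K)`: the supremum of `p'(F)` over all function fields in one variable `F/K`
(every such field is `K`-isomorphic to an intermediate field of an algebraic closure of
`K(X)`). -/
noncomputable def pTilde (K : Type*) [Field K] : ℕ∞ :=
  ⨆ (E : IntermediateField K (AlgebraicClosure (RatFunc K)))
    (_ : IsFunctionField1 K ↥E), pythNum' ↥E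

/-!
The invariant `p'(L)` is decided by finitely many elements of `L` (a representation of `-1`
as a sum of squares, or the summands of a sum of squares), so it is bounded by the values
`p'(M)` on the subextensions `M = K(S)`, `S` finite, which are finite over `K`. Passing from `M`
to `M(X)` does not lower `p'`: after clearing denominators, comparing top coefficients shows
that `M(X)` has the same level as `M`, and specializing `X` shows that a constant which is a sum
of `n` squares in `M(X)` is one in `M` when `M` is infinite, as it is when `M` is real. Finally,
embedding `M` into the algebraic closure of `K(X)` and adjoining the image of `X` realizes
`M(X)` as a function field in one variable over `K`.
-/

section SumsOfSquares

variable {R S : Type*} [CommRing R] [CommRing S]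

theorem IsSumSqN.map {n : ℕ} {a : R} (f : R →+* S) (h : IsSumSqN n a) : IsSumSqN n (f a) := by
  obtain ⟨x, rfl⟩ := h
  exact ⟨fun i => f (x i), by simp⟩

theorem IsSOS.map {a : R} (f : R →+* S) (h : IsSOS a) : IsSOS (f a) :=
  let ⟨n, hn⟩ := h; ⟨n, hn.map f⟩

theorem IsSumSqN.mono {m n : ℕ} {a : R} (h : IsSumSqN m a) (hmn : m ≤ n) : IsSumSqN n a := by
  obtain ⟨x, rfl⟩ := h
  obtain ⟨k, rfl⟩ := Nat.exists_eq_add_of_le hmn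
  exact ⟨Fin.append x 0, by simp [Fin.sum_univ_add]⟩

theorem levelN_le_levelN (h : ∀ n, IsSumSqN n (-1 : S) → IsSumSqN n (-1 : R)) :
    levelN R ≤ levelN S :=
  sInf_le_sInf fun _ ⟨m, hm, hS⟩ => ⟨m, hm, h m hS⟩

theorem levelN_le_of_ringHom (f : R →+* S) : levelN S ≤ levelN R :=
  levelN_le_levelN fun n h => by simpa using h.map f

theorem pythNum_le_pythNum
    (h : ∀ n, (∀ b : S, IsSOS b → IsSumSqN n b) → ∀ a : R, IsSOS a → IsSumSqN n a) :
    pythNum R ≤ pythNum S :=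
  sInf_le_sInf fun _ ⟨m, hm, hS⟩ => ⟨m, hm, h m hS⟩

theorem isSumSqN_of_pythNum_le {n : ℕ} (hn : pythNum R ≤ n) {a : R} (ha : IsSOS a) :
    IsSumSqN n a := by
  obtain ⟨m, hm, hmin⟩ :
      pythNum R ∈ {k : ℕ∞ | ∃ m : ℕ, (m : ℕ∞) = k ∧ ∀ a : R, IsSOS a → IsSumSqN m a} :=
    csInf_mem (Set.nonempty_iff_ne_empty.mpr fun h => by simp [pythNum, h] at hn)
  exact (hmin a ha).mono (by rw [← hm] at hn; exact_mod_cast hn)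

theorem one_le_pythNum [Nontrivial R] : 1 ≤ pythNum R := by
  refine le_sInf fun _ ⟨m, hm, h⟩ => hm ▸ ?_
  obtain ⟨x, hx⟩ := h 1 ⟨1, fun _ => 1, by simp⟩
  rcases m with _ | m
  · simp at hx
  · exact_mod_cast m.succ_pos

theorem pythNum_le_one_of_ringChar_eq_two (h : ringChar R = 2) : pythNum R ≤ 1 := by
  have : CharP R 2 := ringChar.of_eq h
  refine sInf_le ⟨1, Nat.cast_one, fun a ⟨n, x, hx⟩ => ⟨fun _ => ∑ i, x i, ?_⟩⟩
  simp [hx, CharTwo.sum_sq]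

end SumsOfSquares

section ModifiedPythagorasNumber

variable {R S : Type*} [CommRing R] [CommRing S]

theorem pythNum'_of_ringChar_eq_two (h : ringChar R = 2) : pythNum' R = pythNum R := by
  simp [pythNum', h]

theorem pythNum'_of_not_isSOS_neg_one (h : ¬ IsSOS (-1 : R)) : pythNum' R = pythNum R := by
  simp [pythNum', h]

theorem pythNum'_of_isSOS_neg_one (h : IsSOS (-1 : R)) (h2 : ringChar R ≠ 2) :
    pythNum' R = levelN R + 1 := by
  simp [pythNum', h, h2]

theorem one_le_pythNum' [Nontrivial R] : 1 ≤ pythNum' R := by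
  unfold pythNum'
  split
  · exact one_le_pythNum
  · exact le_add_self

theorem levelN_congr (e : R ≃+* S) : levelN R = levelN S :=
  (levelN_le_of_ringHom (e.symm : S →+* R)).antisymm (levelN_le_of_ringHom (e : R →+* S))

theorem pythNum_le_of_ringEquiv (e : R ≃+* S) : pythNum R ≤ pythNum S :=
  pythNum_le_pythNum fun _ hS a ha => by
    simpa using (hS (e a) (ha.map (e : R →+* S))).map (e.symm : S →+* R)

theorem pythNum'_congr (e : R ≃+* S) : pythNum' R = pythNum' S := by
  have hsos : IsSOS (-1 : R) ↔ IsSOS (-1 : S) :=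
    ⟨fun h => by simpa using h.map (e : R →+* S),
      fun h => by simpa using h.map (e.symm : S →+* R)⟩
  have hchar : ringChar R = ringChar S := by
    have := charP_of_injective_ringHom (f := (e : R →+* S)) e.injective (ringChar R)
    exact (ringChar.eq S (ringChar R)).symm
  rw [pythNum', pythNum', hsos, hchar, levelN_congr e,
    (pythNum_le_of_ringEquiv e).antisymm (pythNum_le_of_ringEquiv e.symm)]

theorem charZero_of_not_isSOS_neg_one [IsDomain R] (h : ¬ IsSOS (-1 : R)) : CharZero R := by
  obtain ⟨p, hp⟩ := CharP.exists R
  rcases CharP.char_is_prime_or_zero R p with hprime | rfl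
  · refine absurd ⟨p - 1, fun _ => 1, ?_⟩ h
    simp [Nat.cast_sub hprime.one_le]
  · exact CharP.charP_to_charZero R

end ModifiedPythagorasNumber

section RationalFunctions

open Polynomial

theorem Polynomial.exists_sum_sq_coeff_eq_zero {R ι : Type*} [CommSemiring R] [Fintype ι]
    (q : ι → R[X]) (h : ∑ i, q i ^ 2 = 0) (hq : q ≠ 0) :
    ∃ c : ι → R, ∑ i, c i ^ 2 = 0 ∧ c ≠ 0 := by
  classical
  obtain ⟨j₀, hj₀⟩ := Function.ne_iff.mp hq
  obtain ⟨j, hj, hmax⟩ := Finset.exists_max_image {i | q i ≠ 0} (fun i => (q i).natDegree)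
    ⟨j₀, by simpa using hj₀⟩
  have hdeg (i : ι) : (q i).natDegree ≤ (q j).natDegree := by
    by_cases hi : q i = 0
    · simp [hi]
    · exact hmax i (by simpa using hi)
  refine ⟨fun i => (q i).coeff (q j).natDegree, ?_, Function.ne_iff.mpr ⟨j, ?_⟩⟩
  · simpa [finsetSum_coeff, coeff_pow_of_natDegree_le (hdeg _)] using
      congrArg (coeff · (2 * (q j).natDegree)) h
  · exact leadingCoeff_ne_zero.mpr (by simpa using hj)

variable {M : Type*} [Field M]

theorem isSumSqN_neg_one_of_sum_sq_eq_zero {n : ℕ} (c : Fin (n + 1) → M)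
    (h : ∑ i, c i ^ 2 = 0) (hc : c ≠ 0) : IsSumSqN n (-1 : M) := by
  obtain ⟨j, hj⟩ := Function.ne_iff.mp hc
  rw [Fin.sum_univ_succAbove _ j] at h
  refine ⟨fun i => c (j.succAbove i) / c j, ?_⟩
  simp only [div_pow]
  rw [← Finset.sum_div, eq_div_iff (pow_ne_zero 2 hj)]
  linear_combination -h

theorem RatFunc.exists_C_mul_sq_eq_sum_sq {n : ℕ} {a : M}
    (h : IsSumSqN n (algebraMap M (RatFunc M) a)) :
    ∃ b : M[X], b ≠ 0 ∧ ∃ p : Fin n → M[X], Polynomial.C a * b ^ 2 = ∑ i, p i ^ 2 := by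
  obtain ⟨x, hx⟩ := h
  obtain ⟨b, hb⟩ := IsLocalization.exist_integer_multiples (nonZeroDivisors M[X]) Finset.univ x
  choose p hp using fun i => hb i (Finset.mem_univ i)
  refine ⟨b, nonZeroDivisors.coe_ne_zero b, p, RatFunc.algebraMap_injective M ?_⟩
  simp only [map_mul, map_pow, map_sum, hp, Algebra.smul_def, mul_pow, ← Finset.mul_sum, ← hx,
    RatFunc.algebraMap_C, RatFunc.algebraMap_eq_C]
  ring

theorem IsSumSqN.of_ratFunc_neg_one {n : ℕ} (h : IsSumSqN n (-1 : RatFunc M)) :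
    IsSumSqN n (-1 : M) := by
  obtain ⟨b, hb, p, hp⟩ := RatFunc.exists_C_mul_sq_eq_sum_sq (a := (-1 : M)) (by simpa using h)
  obtain ⟨c, hc, hc0⟩ := exists_sum_sq_coeff_eq_zero (Fin.cons b p)
    (by simp [Fin.sum_univ_succ, ← hp]) (Function.ne_iff.mpr ⟨0, by simpa using hb⟩)
  exact isSumSqN_neg_one_of_sum_sq_eq_zero c hc hc0

theorem IsSumSqN.of_ratFunc_algebraMap [Infinite M] {n : ℕ} {a : M}
    (h : IsSumSqN n (algebraMap M (RatFunc M) a)) : IsSumSqN n a := by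
  obtain ⟨b, hb, p, hp⟩ := RatFunc.exists_C_mul_sq_eq_sum_sq h
  obtain ⟨c, hc⟩ : ∃ c, b.eval c ≠ 0 := by
    by_contra! hb0
    exact hb (Polynomial.funext (by simpa using hb0))
  have hpc := congrArg (eval c) hp
  simp only [eval_mul, eval_pow, eval_C, eval_finsetSum] at hpc
  refine ⟨fun i => (p i).eval c / b.eval c, ?_⟩
  simp only [div_pow, ← Finset.sum_div, ← hpc]
  field_simp

variable (M) in
theorem pythNum'_le_pythNum'_ratFunc :
    pythNum' M ≤ pythNum' (RatFunc M) := by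
  by_cases h2 : ringChar M = 2
  · rw [pythNum'_of_ringChar_eq_two h2]
    exact (pythNum_le_one_of_ringChar_eq_two h2).trans one_le_pythNum'
  by_cases hM : IsSOS (-1 : M)
  · have hMX : IsSOS (-1 : RatFunc M) := by simpa using hM.map (algebraMap M (RatFunc M))
    rw [pythNum'_of_isSOS_neg_one hM h2,
      pythNum'_of_isSOS_neg_one hMX (Algebra.ringChar_eq M (RatFunc M) ▸ h2)]
    gcongr
    exact levelN_le_levelN fun _ h => h.of_ratFunc_neg_one
  · have hMX : ¬ IsSOS (-1 : RatFunc M) := fun ⟨n, h⟩ => hM ⟨n, h.of_ratFunc_neg_one⟩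
    have := charZero_of_not_isSOS_neg_one hM
    rw [pythNum'_of_not_isSOS_neg_one hM, pythNum'_of_not_isSOS_neg_one hMX]
    exact pythNum_le_pythNum fun _ h _ ha =>
      (h _ (ha.map (algebraMap M (RatFunc M)))).of_ratFunc_algebraMap

end RationalFunctions

section Subextensions

open IntermediateField

variable {K L : Type*} [Field K] [Field L] [Algebra K L]

theorem IsSumSqN.exists_adjoin_finset {n : ℕ} {a : L} (h : IsSumSqN n a) :
    ∃ (S : Finset L) (b : adjoin K (S : Set L)), IsSumSqN n b ∧ algebraMap _ L b = a := by
  classical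
  obtain ⟨x, rfl⟩ := h
  let y (i : Fin n) : adjoin K (Finset.univ.image x : Set L) :=
    ⟨x i, subset_adjoin K _ (by simp)⟩
  exact ⟨_, ∑ i, y i ^ 2, ⟨y, rfl⟩, by simp [y]⟩

variable (K L) in
theorem pythNum'_le_iSup_adjoin_finset :
    pythNum' L ≤ ⨆ S : Finset L, pythNum' (adjoin K (S : Set L)) := by
  by_cases h2 : ringChar L = 2
  · rw [pythNum'_of_ringChar_eq_two h2]
    exact (pythNum_le_one_of_ringChar_eq_two h2).trans (one_le_pythNum'.trans
      (le_iSup (fun S : Finset L => pythNum' (adjoin K (S : Set L))) ∅))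
  by_cases hL : IsSOS (-1 : L)
  · obtain ⟨n, hn⟩ := hL
    obtain ⟨S, b, hb, hbL⟩ := hn.exists_adjoin_finset (K := K)
    obtain rfl : b = -1 := (algebraMap (adjoin K (S : Set L)) L).injective (by simp [hbL])
    refine le_iSup_of_le S ?_
    rw [pythNum'_of_isSOS_neg_one ⟨n, hn⟩ h2,
      pythNum'_of_isSOS_neg_one ⟨n, hb⟩ (Algebra.ringChar_eq (adjoin K (S : Set L)) L ▸ h2)]
    gcongr
    exact levelN_le_of_ringHom (algebraMap (adjoin K (S : Set L)) L)
  · have hS (S : Finset L) : ¬ IsSOS (-1 : adjoin K (S : Set L)) := fun h =>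
      hL (by simpa using h.map (algebraMap _ L))
    simp only [pythNum'_of_not_isSOS_neg_one hL, pythNum'_of_not_isSOS_neg_one (hS _)]
    induction hB : ⨆ S : Finset L, pythNum (adjoin K (S : Set L)) using ENat.recTopCoe with
    | top => exact le_top
    | coe n =>
      refine sInf_le ⟨n, rfl, fun a ⟨k, hk⟩ => ?_⟩
      obtain ⟨S, b, hb, rfl⟩ := hk.exists_adjoin_finset (K := K)
      have hSn : pythNum (adjoin K (S : Set L)) ≤ n :=
        hB ▸ le_iSup (fun S : Finset L => pythNum (adjoin K (S : Set L))) S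
      exact (isSumSqN_of_pythNum_le hSn ⟨k, hb⟩).map _

end Subextensions

section FunctionFields

open IntermediateField

theorem isFunctionField1_adjoin_insert {K Ω : Type*} [Field K] [Field Ω] [Algebra K Ω]
    {x : Ω} {S : Set Ω} (hS : S.Finite) (hx : Transcendental K x)
    (hSint : ∀ s ∈ S, IsIntegral K s) : IsFunctionField1 K (adjoin K (insert x S)) := by
  set E := adjoin K (insert x S)
  let x' : E := ⟨x, subset_adjoin K _ (Set.mem_insert x S)⟩
  let S' : Set E := Subtype.val ⁻¹' S
  have hS' : S'.Finite := hS.preimage Subtype.val_injective.injOn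
  have htop : adjoin K (insert x' S') = ⊤ := by
    refine lift_injective _ ?_
    rw [lift_adjoin, lift_top, Set.image_insert_eq, Set.image_preimage_eq_of_subset]
    exact fun s hs => ⟨⟨s, subset_adjoin K _ (Set.mem_insert_of_mem x hs)⟩, rfl⟩
  refine ⟨⟨hS'.insert x' |>.toFinset, by simpa using htop⟩, x',
    fun h => hx ((isAlgebraic_algHom_iff E.val Subtype.val_injective).mpr h), ?_⟩
  have htop' : adjoin (adjoin K {x'}) S' = ⊤ := by
    rwa [← restrictScalars_eq_top_iff (K := K), adjoin_adjoin_left, Set.singleton_union]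
  have : Algebra.IsAlgebraic (adjoin K {x'}) (adjoin (adjoin K {x'}) S') :=
    isAlgebraic_adjoin fun s hs => ((isIntegral_algHom_iff E.val Subtype.val_injective).mp
      (hSint _ hs)).tower_top
  exact ((equivOfEq htop').trans topEquiv).isAlgebraic

end FunctionFields

theorem pythNum'_le_pTilde {K : Type*} [Field K]
    {E : IntermediateField K (AlgebraicClosure (RatFunc K))} (hE : IsFunctionField1 K E) :
    pythNum' E ≤ pTilde K :=
  le_iSup₂ (f := fun (F : IntermediateField K _) (_ : IsFunctionField1 K F) => pythNum' F) E hE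

open IntermediateField in
theorem pythNum'_adjoin_le_pTilde (K : Type*) [Field K] {S : Set (AlgebraicClosure (RatFunc K))}
    (hS : S.Finite) (hint : ∀ s ∈ S, IsIntegral K s) : pythNum' (adjoin K S) ≤ pTilde K := by
  set N := adjoin K S
  have : Algebra.IsAlgebraic K N := isAlgebraic_adjoin hint
  set t := algebraMap (RatFunc K) (AlgebraicClosure (RatFunc K)) RatFunc.X
  have ht : Transcendental K t := (transcendental_algebraMap_iff
    (algebraMap (RatFunc K) _).injective).mpr RatFunc.transcendental_X
  have hNt : (adjoin N {t}).restrictScalars K = adjoin K (insert t S) := by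
    rw [restrictScalars_adjoin, Set.union_singleton, adjoin_insert_adjoin]
  calc pythNum' N ≤ pythNum' (RatFunc N) := pythNum'_le_pythNum'_ratFunc N
    _ = pythNum' (adjoin N {t}) :=
      pythNum'_congr (RatFunc.algEquivOfTranscendental t (ht.extendScalars N)).toRingEquiv
    _ = pythNum' ((adjoin N {t}).restrictScalars K) := rfl
    _ ≤ pTilde K := pythNum'_le_pTilde (hNt ▸ isFunctionField1_adjoin_insert hS ht hint)

open IntermediateField in
/-- For every algebraic field extension `L/K`, `p̃(K) ≥ p'(L)`. -/
theorem pythNum'_le_pTilde_of_isAlgebraic (K : Type u) [Field K] (L : Type u) [Field L]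
    [Algebra K L] [Algebra.IsAlgebraic K L] :
    pythNum' L ≤ pTilde K := by
  let ψ : L →ₐ[K] AlgebraicClosure (RatFunc K) := IsAlgClosed.lift
  refine (pythNum'_le_iSup_adjoin_finset K L).trans (iSup_le fun S => ?_)
  rw [pythNum'_congr ((adjoin K (S : Set L)).equivMap ψ).toRingEquiv, adjoin_map]
  exact pythNum'_adjoin_le_pTilde K (S.finite_toSet.image ψ)
    (by rintro _ ⟨s, -, rfl⟩; exact (Algebra.IsIntegral.isIntegral s).map ψ)
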